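/- arXiv:1606.08943 — 5 statements merged into one kernel-verified Lean document; each statement's English description precedes it below -/
import Mathlib

section
/- Let R = (<₁, <₂, <₃) be a standard representation of a finite set V with |V| ≥ 3, with <ᵢ-maximum elements a₁, a₂, a₃. If w and w' are two distinct neighbors of a₁ in Σ₂(R), then w <₂ w' if and only if w' <₃ w. (Equivalently, the <₂-increasing order on the neighbors of a₁ is the <₃-decreasing order.) -/
open SimpleGraph

variable {V : Type*}

/-- The graph Σ₂(R) for a triple of linear orders R = (l₁, l₂, l₃) on V:
`x` and `y` are adjacent iff every other vertex `z` lies above both `x` and `y`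
in one of the three orders. -/
def Sigma2 (l₁ l₂ l₃ : LinearOrder V) : SimpleGraph V where
  Adj x y := x ≠ y ∧ ∀ z, z ≠ x → z ≠ y →
    (l₁.lt x z ∧ l₁.lt y z) ∨ (l₂.lt x z ∧ l₂.lt y z) ∨ (l₃.lt x z ∧ l₃.lt y z)
  symm := ⟨by
    rintro x y ⟨hxy, h⟩
    exact ⟨hxy.symm, fun z hzy hzx => by rcases h z hzx hzy with h|h|h <;> tauto⟩⟩
  loopless := ⟨fun x h => h.1 rfl⟩

/-- The three orders have empty intersection: for distinct x, y, some order has x below y. -/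
def IsRep (l₁ l₂ l₃ : LinearOrder V) : Prop :=
  ∀ x y : V, x ≠ y → l₁.lt x y ∨ l₂.lt x y ∨ l₃.lt x y

/-- `a` is the maximum element of the linear order `l`. -/
def IsMaxOf (l : LinearOrder V) (a : V) : Prop := ∀ x, x ≠ a → l.lt x a

/-- `a` is among the two smallest elements of `l`: at most one element lies below `a`. -/
def AmongTwoSmallest (l : LinearOrder V) (a : V) : Prop :=
  ∀ x y, l.lt x a → l.lt y a → x = y

/-- `R = (l₁, l₂, l₃)` is a standard representation with `<ᵢ`-maxima `a₁, a₂, a₃`. -/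
structure IsStdRep (l₁ l₂ l₃ : LinearOrder V) (a₁ a₂ a₃ : V) : Prop where
  rep : IsRep l₁ l₂ l₃
  top₁ : IsMaxOf l₁ a₁
  top₂ : IsMaxOf l₂ a₂
  top₃ : IsMaxOf l₃ a₃
  a₁_small₂ : AmongTwoSmallest l₂ a₁
  a₁_small₃ : AmongTwoSmallest l₃ a₁
  a₂_small₁ : AmongTwoSmallest l₁ a₂
  a₂_small₃ : AmongTwoSmallest l₃ a₂
  a₃_small₁ : AmongTwoSmallest l₁ a₃
  a₃_small₂ : AmongTwoSmallest l₂ a₃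

/-- The restriction of a linear order on `V` to `V \ {b}`. -/
def restrictOrder (l : LinearOrder V) (b : V) : LinearOrder {x : V // x ≠ b} :=
  @LinearOrder.lift' _ _ l Subtype.val Subtype.val_injective

theorem Sigma2.lt_or_lt_of_adj_of_isMaxOf {l₁ l₂ l₃ : LinearOrder V} {a x z : V}
    (ha : IsMaxOf l₁ a) (hax : (Sigma2 l₁ l₂ l₃).Adj a x) (hza : z ≠ a) (hzx : z ≠ x) :
    l₂.lt x z ∨ l₃.lt x z := by
  rcases hax.2 z hza hzx with ⟨haz, -⟩ | ⟨-, hxz⟩ | ⟨-, hxz⟩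
  · exact absurd (ha z hza) (@lt_asymm V l₁.toPreorder _ _ haz)
  · exact .inl hxz
  · exact .inr hxz

theorem stmt1_general {V : Type*}
    (l₁ l₂ l₃ : LinearOrder V) (a₁ a₂ a₃ : V)
    (hR : IsStdRep l₁ l₂ l₃ a₁ a₂ a₃)
    (w w' : V) (hw : (Sigma2 l₁ l₂ l₃).Adj a₁ w) (hw' : (Sigma2 l₁ l₂ l₃).Adj a₁ w')
    (hne : w ≠ w') :
    l₂.lt w w' ↔ l₃.lt w' w := by
  have hw'w := Sigma2.lt_or_lt_of_adj_of_isMaxOf hR.top₁ hw' hw.ne' hne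
  have hww' := Sigma2.lt_or_lt_of_adj_of_isMaxOf hR.top₁ hw hw'.ne' hne.symm
  exact ⟨fun h => hw'w.resolve_left (@lt_asymm V l₂.toPreorder _ _ h),
    fun h => hww'.resolve_right (@lt_asymm V l₃.toPreorder _ _ h)⟩

/-- For two distinct neighbors w, w' of a₁ in Σ₂(R),
w <₂ w' iff w' <₃ w. -/
theorem stmt1 {V : Type*} [Fintype V] (hV : 3 ≤ Fintype.card V)
    (l₁ l₂ l₃ : LinearOrder V) (a₁ a₂ a₃ : V)
    (hR : IsStdRep l₁ l₂ l₃ a₁ a₂ a₃)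
    (w w' : V) (hw : (Sigma2 l₁ l₂ l₃).Adj a₁ w) (hw' : (Sigma2 l₁ l₂ l₃).Adj a₁ w')
    (hne : w ≠ w') :
    l₂.lt w w' ↔ l₃.lt w' w :=
  stmt1_general l₁ l₂ l₃ a₁ a₂ a₃ hR w w' hw hw' hne
end

section
/- Let R = (<₁, <₂, <₃) be a standard representation of a finite set V with |V| ≥ 3, with <ᵢ-maximum elements a₁, a₂, a₃, and let b be the <₁-maximum element of V \ {a₁}. Then a₁b is an edge of Σ₂(R). -/
open SimpleGraph

variable {V : Type*}

/-! Every `z ∉ {a₁, b}` lies `<₁`-below `b`, so by the representation property `b <ᵢ z` for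
`i = 2` or `i = 3`. In that order `a₁` is among the two smallest elements, so `z <ᵢ a₁` is
impossible (both `b` and `z` would lie below `a₁`): hence `z` lies `<ᵢ`-above both `a₁` and `b`. -/

theorem IsRep.lt_or_lt_of_lt₁ {l₁ l₂ l₃ : LinearOrder V} (hR : IsRep l₁ l₂ l₃) {x z : V}
    (hzx : l₁.lt z x) : l₂.lt x z ∨ l₃.lt x z := by
  let _ := l₁
  exact (hR x z hzx.ne').resolve_left hzx.asymm

theorem AmongTwoSmallest.lt_of_lt {l : LinearOrder V} {a b z : V} (ha : AmongTwoSmallest l a)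
    (hza : z ≠ a) (hbz : l.lt b z) : l.lt a z := by
  let _ := l
  by_contra h
  have hza' : z < a := (not_lt.mp h).lt_of_ne hza
  obtain rfl := ha b z (hbz.trans hza') hza'
  exact lt_irrefl b hbz

theorem stmt5_general {V : Type*}
    (l₁ l₂ l₃ : LinearOrder V) (a₁ a₂ a₃ : V)
    (hR : IsStdRep l₁ l₂ l₃ a₁ a₂ a₃)
    (b : V) (hba : b ≠ a₁) (hb : ∀ x, x ≠ a₁ → x ≠ b → l₁.lt x b) :
    (Sigma2 l₁ l₂ l₃).Adj a₁ b := by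
  refine ⟨hba.symm, fun z hza hzb => ?_⟩
  rcases hR.rep.lt_or_lt_of_lt₁ (hb z hza hzb) with hbz | hbz
  · exact Or.inr (Or.inl ⟨hR.a₁_small₂.lt_of_lt hza hbz, hbz⟩)
  · exact Or.inr (Or.inr ⟨hR.a₁_small₃.lt_of_lt hza hbz, hbz⟩)

/-- For b the <₁-maximum element of V \ {a₁}, a₁b is an edge of Σ₂(R). -/
theorem stmt5 {V : Type*} [Fintype V] (hV : 3 ≤ Fintype.card V)
    (l₁ l₂ l₃ : LinearOrder V) (a₁ a₂ a₃ : V)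
    (hR : IsStdRep l₁ l₂ l₃ a₁ a₂ a₃)
    (b : V) (hba : b ≠ a₁) (hb : ∀ x, x ≠ a₁ → x ≠ b → l₁.lt x b) :
    (Sigma2 l₁ l₂ l₃).Adj a₁ b :=
  stmt5_general l₁ l₂ l₃ a₁ a₂ a₃ hR b hba hb
end

section
/- Let R = (<₁, <₂, <₃) be a standard representation of a finite set V with |V| ≥ 4, with <ᵢ-maximum elements a₁, a₂, a₃, and let b be the <₁-maximum element of V \ {a₁}. Let R' = (<₁', <₂', <₃') be the triple of linear orders on V' = V \ {b} obtained by restricting each <ᵢ to V'. Then R' is a standard representation of V', and its <ᵢ'-maximum elements are again a₁, a₂, a₃. -/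
open SimpleGraph

variable {V : Type*}

/-!
Restricting linear orders to `V \ {b}` preserves every condition of a standard representation
that only speaks about the remaining elements, so the only point is that `a₂` and `a₃` survive,
i.e. differ from `b`. Since `|V| ≥ 4`, at least two elements other than `a₁` and `b` lie `<₁`-below
`b`, whereas `a₂` and `a₃` have at most one element `<₁`-below them.
-/

open Finset in
theorem exists_pair_ne_of_four_le_card [Fintype V] (hV : 4 ≤ Fintype.card V) (a b : V) :
    ∃ x y : V, x ≠ y ∧ x ≠ a ∧ x ≠ b ∧ y ≠ a ∧ y ≠ b := by
  classical
  have hcard : 1 < ({a, b}ᶜ : Finset V).card := by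
    have := card_le_two (a := a) (b := b)
    rw [card_compl]
    omega
  obtain ⟨x, hx, y, hy, hxy⟩ := one_lt_card.mp hcard
  simp only [mem_compl, mem_insert, mem_singleton, not_or] at hx hy
  exact ⟨x, y, hxy, hx.1, hx.2, hy.1, hy.2⟩

theorem AmongTwoSmallest.ne_of_lt_of_lt {l : LinearOrder V} {a c x y : V}
    (ha : AmongTwoSmallest l a) (hxy : x ≠ y) (hx : l.lt x c) (hy : l.lt y c) : a ≠ c := by
  rintro rfl
  exact hxy (ha x y hx hy)

section Restrict

variable {l l₁ l₂ l₃ : LinearOrder V} {b : V}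

theorem IsRep.restrict (h : IsRep l₁ l₂ l₃) :
    IsRep (restrictOrder l₁ b) (restrictOrder l₂ b) (restrictOrder l₃ b) :=
  fun u v huv => h u.val v.val (Subtype.val_injective.ne huv)

theorem IsMaxOf.restrict {a : V} (h : IsMaxOf l a) (hab : a ≠ b) :
    IsMaxOf (restrictOrder l b) ⟨a, hab⟩ :=
  fun u hu => h u.val (fun hua => hu (Subtype.ext hua))

theorem AmongTwoSmallest.restrict {a : V} (h : AmongTwoSmallest l a) (hab : a ≠ b) :
    AmongTwoSmallest (restrictOrder l b) ⟨a, hab⟩ :=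
  fun u v hu hv => Subtype.ext (h u.val v.val hu hv)

theorem IsStdRep.restrict {a₁ a₂ a₃ : V} (h : IsStdRep l₁ l₂ l₃ a₁ a₂ a₃)
    (h₁ : a₁ ≠ b) (h₂ : a₂ ≠ b) (h₃ : a₃ ≠ b) :
    IsStdRep (restrictOrder l₁ b) (restrictOrder l₂ b) (restrictOrder l₃ b)
      ⟨a₁, h₁⟩ ⟨a₂, h₂⟩ ⟨a₃, h₃⟩ where
  rep := h.rep.restrict
  top₁ := h.top₁.restrict h₁
  top₂ := h.top₂.restrict h₂
  top₃ := h.top₃.restrict h₃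
  a₁_small₂ := h.a₁_small₂.restrict h₁
  a₁_small₃ := h.a₁_small₃.restrict h₁
  a₂_small₁ := h.a₂_small₁.restrict h₂
  a₂_small₃ := h.a₂_small₃.restrict h₂
  a₃_small₁ := h.a₃_small₁.restrict h₃
  a₃_small₂ := h.a₃_small₂.restrict h₃

end Restrict

/-- Restricting the three orders of a standard representation to
V' = V \ {b}, where b is the <₁-maximum of V \ {a₁}, yields a standard representation
of V' whose maximum elements are again a₁, a₂, a₃. -/
theorem stmt8 {V : Type*} [Fintype V] (hV : 4 ≤ Fintype.card V)
    (l₁ l₂ l₃ : LinearOrder V) (a₁ a₂ a₃ : V)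
    (hR : IsStdRep l₁ l₂ l₃ a₁ a₂ a₃)
    (b : V) (hba : b ≠ a₁) (hb : ∀ x, x ≠ a₁ → x ≠ b → l₁.lt x b) :
    ∃ a₁' a₂' a₃' : {x : V // x ≠ b},
      a₁'.val = a₁ ∧ a₂'.val = a₂ ∧ a₃'.val = a₃ ∧
      IsStdRep (restrictOrder l₁ b) (restrictOrder l₂ b) (restrictOrder l₃ b)
        a₁' a₂' a₃' := by
  obtain ⟨x, y, hxy, hxa, hxb, hya, hyb⟩ := exists_pair_ne_of_four_le_card hV a₁ b
  have ha₂ : a₂ ≠ b := hR.a₂_small₁.ne_of_lt_of_lt hxy (hb x hxa hxb) (hb y hya hyb)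
  have ha₃ : a₃ ≠ b := hR.a₃_small₁.ne_of_lt_of_lt hxy (hb x hxa hxb) (hb y hya hyb)
  exact ⟨_, _, _, rfl, rfl, rfl, hR.restrict hba.symm ha₂ ha₃⟩
end

section
/- Let R = (<₁, <₂, <₃) be a standard representation of a finite set V with |V| = n ≥ 3. Then the graph Σ₂(R) has exactly 3n − 6 edges. -/
open SimpleGraph

variable {V : Type*}

section Aux

variable {V : Type*}

lemma lo_asymm (l : LinearOrder V) {x y : V} (h : l.lt x y) (h' : l.lt y x) : False := by
  letI := l; exact lt_asymm h h'

lemma lo_not_lt (l : LinearOrder V) {x y : V} (h : l.lt x y) : ¬ l.lt y x :=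
  fun h' => lo_asymm l h h'

lemma lo_trans (l : LinearOrder V) {x y z : V} (h : l.lt x y) (h' : l.lt y z) : l.lt x z := by
  letI := l; exact lt_trans h h'

lemma lo_total (l : LinearOrder V) {x y : V} (h : x ≠ y) : l.lt x y ∨ l.lt y x := by
  letI := l; exact lt_or_gt_of_ne h

lemma lo_ne (l : LinearOrder V) {x y : V} (h : l.lt x y) : x ≠ y := by
  letI := l; exact ne_of_lt h

lemma max_small [Fintype V] (l : LinearOrder V) {a : V}
    (h1 : IsMaxOf l a) (h2 : AmongTwoSmallest l a) : Fintype.card V ≤ 2 := by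
  classical
  have key : ∀ x y : V, x ≠ a → y ≠ a → x = y := fun x y hx hy => h2 x y (h1 x hx) (h1 y hy)
  have hle : Fintype.card V ≤ Fintype.card Bool := by
    apply Fintype.card_le_of_injective (fun x => if x = a then true else false)
    intro x y hxy
    by_cases hx : x = a
    · by_cases hy : y = a
      · rw [hx, hy]
      · simp [hx, hy] at hxy
    · by_cases hy : y = a
      · simp [hx, hy] at hxy
      · exact key x y hx hy
  simpa using hle

lemma below_eq (l : LinearOrder V) {a b x : V}
    (ha : AmongTwoSmallest l a) (hb : AmongTwoSmallest l b) (hab : a ≠ b)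
    (hx : l.lt x a) : x = b := by
  rcases lo_total l hab with h | h
  · have hxa : x = a := hb x a (lo_trans l hx h) h
    exact absurd hx (by rw [hxa]; letI := l; exact lt_irrefl a)
  · exact ha x b hx h

lemma IsStdRep.rot {l₁ l₂ l₃ : LinearOrder V} {a₁ a₂ a₃ : V}
    (h : IsStdRep l₁ l₂ l₃ a₁ a₂ a₃) : IsStdRep l₂ l₃ l₁ a₂ a₃ a₁ where
  rep x y hxy := by rcases h.rep x y hxy with h'|h'|h' <;> tauto
  top₁ := h.top₂
  top₂ := h.top₃
  top₃ := h.top₁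
  a₁_small₂ := h.a₂_small₃
  a₁_small₃ := h.a₂_small₁
  a₂_small₁ := h.a₃_small₂
  a₂_small₃ := h.a₃_small₁
  a₃_small₁ := h.a₁_small₂
  a₃_small₂ := h.a₁_small₃

lemma IsStdRep.swap23 {l₁ l₂ l₃ : LinearOrder V} {a₁ a₂ a₃ : V}
    (h : IsStdRep l₁ l₂ l₃ a₁ a₂ a₃) : IsStdRep l₁ l₃ l₂ a₁ a₃ a₂ where
  rep x y hxy := by rcases h.rep x y hxy with h'|h'|h' <;> tauto
  top₁ := h.top₁
  top₂ := h.top₃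
  top₃ := h.top₂
  a₁_small₂ := h.a₁_small₃
  a₁_small₃ := h.a₁_small₂
  a₂_small₁ := h.a₃_small₁
  a₂_small₃ := h.a₃_small₂
  a₃_small₁ := h.a₂_small₁
  a₃_small₂ := h.a₂_small₃

lemma sigma2_swap12 (l₁ l₂ l₃ : LinearOrder V) : Sigma2 l₂ l₁ l₃ = Sigma2 l₁ l₂ l₃ := by
  ext x y
  constructor <;> rintro ⟨h1, h2⟩ <;>
    exact ⟨h1, fun z hz hz' => by rcases h2 z hz hz' with h|h|h <;> tauto⟩

lemma sigma2_rot2 (l₁ l₂ l₃ : LinearOrder V) : Sigma2 l₃ l₁ l₂ = Sigma2 l₁ l₂ l₃ := by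
  ext x y
  constructor <;> rintro ⟨h1, h2⟩ <;>
    exact ⟨h1, fun z hz hz' => by rcases h2 z hz hz' with h|h|h <;> tauto⟩

lemma nonapex_nonempty {m₁ m₂ m₃ : LinearOrder V} {b₁ b₂ b₃ : V}
    (hR : IsStdRep m₁ m₂ m₃ b₁ b₂ b₃) (h12 : b₁ ≠ b₂) (h13 : b₁ ≠ b₃)
    {v : V} (hv1 : v ≠ b₁) (hv2 : v ≠ b₂) (hv3 : v ≠ b₃) :
    ∃ u, m₁.lt v u ∧ m₂.lt u v ∧ m₃.lt u v := by
  refine ⟨b₁, hR.top₁ v hv1, ?_, ?_⟩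
  · rcases lo_total m₂ (Ne.symm hv1) with h | h
    · exact h
    · exact absurd (below_eq m₂ hR.a₁_small₂ hR.a₃_small₂ h13 h) hv3
  · rcases lo_total m₃ (Ne.symm hv1) with h | h
    · exact h
    · exact absurd (below_eq m₃ hR.a₁_small₃ hR.a₂_small₃ h12 h) hv2

lemma apex1_empty {m₁ m₂ m₃ : LinearOrder V} {b₁ b₂ b₃ : V}
    (hR : IsStdRep m₁ m₂ m₃ b₁ b₂ b₃) :
    ¬ ∃ u, m₁.lt b₁ u ∧ m₂.lt u b₁ ∧ m₃.lt u b₁ := by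
  rintro ⟨u, hu⟩
  exact lo_asymm m₁ hu.1 (hR.top₁ u (Ne.symm (lo_ne m₁ hu.1)))

lemma apex2_iff {m₁ m₂ m₃ : LinearOrder V} {b₁ b₂ b₃ : V}
    (hR : IsStdRep m₁ m₂ m₃ b₁ b₂ b₃) (h12 : b₁ ≠ b₂) :
    (∃ u, m₁.lt b₂ u ∧ m₂.lt u b₂ ∧ m₃.lt u b₂) ↔ m₃.lt b₁ b₂ := by
  constructor
  · rintro ⟨u, hu⟩
    have hu1 : u = b₁ := below_eq m₃ hR.a₂_small₃ hR.a₁_small₃ (Ne.symm h12) hu.2.2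
    exact hu1 ▸ hu.2.2
  · intro h
    exact ⟨b₁, hR.top₁ b₂ (Ne.symm h12), hR.top₂ b₁ h12, h⟩

lemma apex3_iff {m₁ m₂ m₃ : LinearOrder V} {b₁ b₂ b₃ : V}
    (hR : IsStdRep m₁ m₂ m₃ b₁ b₂ b₃) (h13 : b₁ ≠ b₃) :
    (∃ u, m₁.lt b₃ u ∧ m₂.lt u b₃ ∧ m₃.lt u b₃) ↔ m₂.lt b₁ b₃ := by
  constructor
  · rintro ⟨u, hu⟩
    have hu1 : u = b₁ := below_eq m₂ hR.a₃_small₂ hR.a₁_small₂ (Ne.symm h13) hu.2.1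
    exact hu1 ▸ hu.2.1
  · intro h
    exact ⟨b₁, hR.top₁ b₃ (Ne.symm h13), h, hR.top₃ b₁ h13⟩

lemma key_if [Fintype V] (m₁ m₂ m₃ : LinearOrder V) (hrep : IsRep m₁ m₂ m₃)
    (v : V) {p : V → Prop} [DecidablePred p]
    (hp : ∀ u, p u ↔ ((Sigma2 m₁ m₂ m₃).Adj v u ∧ m₁.lt v u ∧ m₂.lt u v ∧ m₃.lt u v))
    {Q : Prop} [Decidable Q]
    (hQ : (∃ u, m₁.lt v u ∧ m₂.lt u v ∧ m₃.lt u v) ↔ Q) :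
    (Finset.univ.filter p).card = if Q then 1 else 0 := by
  classical
  by_cases h : ∃ u, m₁.lt v u ∧ m₂.lt u v ∧ m₃.lt u v
  · rw [if_pos (hQ.mp h)]
    letI := m₁
    obtain ⟨u₀, hu₀s, hmin⟩ :=
      (Finset.univ.filter (fun u => m₁.lt v u ∧ m₂.lt u v ∧ m₃.lt u v)).exists_min_image id
        (by obtain ⟨u, hu⟩ := h; exact ⟨u, by simpa using hu⟩)
    have hu₀ : m₁.lt v u₀ ∧ m₂.lt u₀ v ∧ m₃.lt u₀ v := by simpa using hu₀s
    have hadj : (Sigma2 m₁ m₂ m₃).Adj v u₀ := by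
      refine ⟨lo_ne m₁ hu₀.1, fun z hzv hzu₀ => ?_⟩
      by_contra hcon
      have h1 : ¬ (m₁.lt v z ∧ m₁.lt u₀ z) := fun hh => hcon (Or.inl hh)
      have h2 : ¬ (m₂.lt v z ∧ m₂.lt u₀ z) := fun hh => hcon (Or.inr (Or.inl hh))
      have h3 : ¬ (m₃.lt v z ∧ m₃.lt u₀ z) := fun hh => hcon (Or.inr (Or.inr hh))
      have hz1 : m₁.lt z u₀ := by
        rcases lo_total m₁ hzu₀ with h' | h'
        · exact h'
        · exact absurd ⟨lo_trans m₁ hu₀.1 h', h'⟩ h1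
      have hz2 : m₂.lt z v := by
        rcases lo_total m₂ hzv with h' | h'
        · exact h'
        · exact absurd ⟨h', lo_trans m₂ hu₀.2.1 h'⟩ h2
      have hz3 : m₃.lt z v := by
        rcases lo_total m₃ hzv with h' | h'
        · exact h'
        · exact absurd ⟨h', lo_trans m₃ hu₀.2.2 h'⟩ h3
      rcases hrep v z (Ne.symm hzv) with h' | h' | h'
      · have hle : u₀ ≤ z := by simpa using hmin z (by simp [h', hz2, hz3])
        exact absurd hz1 (not_lt.mpr hle)
      · exact lo_asymm m₂ h' hz2
      · exact lo_asymm m₃ h' hz3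
    have hsingle : Finset.univ.filter p = {u₀} := by
      ext u
      simp only [Finset.mem_filter, Finset.mem_univ, true_and, Finset.mem_singleton, hp]
      constructor
      · rintro ⟨hadj', hc⟩
        by_contra hne
        have hle : u₀ ≤ u := by simpa using hmin u (by simp [hc.1, hc.2.1, hc.2.2])
        have hlt : m₁.lt u₀ u := lt_of_le_of_ne hle (fun hh => hne hh.symm)
        rcases hadj'.2 u₀ (Ne.symm (lo_ne m₁ hu₀.1)) (fun hh => hne hh.symm) with h' | h' | h'
        · exact lo_asymm m₁ hlt h'.2
        · exact lo_asymm m₂ h'.1 hu₀.2.1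
        · exact lo_asymm m₃ h'.1 hu₀.2.2
      · rintro rfl
        exact ⟨hadj, hu₀⟩
    rw [hsingle, Finset.card_singleton]
  · rw [if_neg (fun hq => h (hQ.mpr hq)), Finset.card_eq_zero, Finset.filter_eq_empty_iff]
    intro u _
    rw [hp]
    exact fun hc => h ⟨u, hc.2⟩

end Aux

/-- If |V| = n ≥ 3 then Σ₂(R) has exactly 3n - 6 edges. -/
theorem stmt12 {V : Type*} [Fintype V] (n : ℕ) (hn : Fintype.card V = n) (hV : 3 ≤ n)
    (l₁ l₂ l₃ : LinearOrder V) (a₁ a₂ a₃ : V)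
    (hR : IsStdRep l₁ l₂ l₃ a₁ a₂ a₃) :
    Nat.card (Sigma2 l₁ l₂ l₃).edgeSet = 3 * n - 6 := by
  classical
  subst hn
  have h12 : a₁ ≠ a₂ := fun h => absurd (max_small l₂ hR.top₂ (h ▸ hR.a₁_small₂)) (by omega)
  have h13 : a₁ ≠ a₃ := fun h => absurd (max_small l₃ hR.top₃ (h ▸ hR.a₁_small₃)) (by omega)
  have h23 : a₂ ≠ a₃ := fun h => absurd (max_small l₃ hR.top₃ (h ▸ hR.a₂_small₃)) (by omega)
  have hRc2 : IsStdRep l₂ l₁ l₃ a₂ a₁ a₃ := hR.rot.swap23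
  have hRc3 : IsStdRep l₃ l₁ l₂ a₃ a₁ a₂ := hR.rot.rot
  -- per-vertex per-color counting lemmas
  have hsplit : ∀ v : V, (Finset.univ.filter (fun u =>
        ((Sigma2 l₁ l₂ l₃).Adj v u ∧ l₁.lt v u ∧ l₂.lt u v ∧ l₃.lt u v) ∨
        ((Sigma2 l₁ l₂ l₃).Adj v u ∧ l₂.lt v u ∧ l₁.lt u v ∧ l₃.lt u v) ∨
        ((Sigma2 l₁ l₂ l₃).Adj v u ∧ l₃.lt v u ∧ l₁.lt u v ∧ l₂.lt u v))).card
      = (Finset.univ.filter (fun u =>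
          (Sigma2 l₁ l₂ l₃).Adj v u ∧ l₁.lt v u ∧ l₂.lt u v ∧ l₃.lt u v)).card
      + ((Finset.univ.filter (fun u =>
          (Sigma2 l₁ l₂ l₃).Adj v u ∧ l₂.lt v u ∧ l₁.lt u v ∧ l₃.lt u v)).card
      + (Finset.univ.filter (fun u =>
          (Sigma2 l₁ l₂ l₃).Adj v u ∧ l₃.lt v u ∧ l₁.lt u v ∧ l₂.lt u v)).card) := by
    intro v
    have hd23 : Disjoint
        (Finset.univ.filter (fun u =>
          (Sigma2 l₁ l₂ l₃).Adj v u ∧ l₂.lt v u ∧ l₁.lt u v ∧ l₃.lt u v))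
        (Finset.univ.filter (fun u =>
          (Sigma2 l₁ l₂ l₃).Adj v u ∧ l₃.lt v u ∧ l₁.lt u v ∧ l₂.lt u v)) := by
      rw [Finset.disjoint_left]
      intro u hu hu'
      rw [Finset.mem_filter] at hu hu'
      exact lo_asymm l₂ hu.2.2.1 hu'.2.2.2.2
    have hd1 : Disjoint
        (Finset.univ.filter (fun u =>
          (Sigma2 l₁ l₂ l₃).Adj v u ∧ l₁.lt v u ∧ l₂.lt u v ∧ l₃.lt u v))
        ((Finset.univ.filter (fun u =>
          (Sigma2 l₁ l₂ l₃).Adj v u ∧ l₂.lt v u ∧ l₁.lt u v ∧ l₃.lt u v)) ∪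
         (Finset.univ.filter (fun u =>
          (Sigma2 l₁ l₂ l₃).Adj v u ∧ l₃.lt v u ∧ l₁.lt u v ∧ l₂.lt u v))) := by
      rw [Finset.disjoint_left]
      intro u hu hu'
      rw [Finset.mem_filter] at hu
      rw [Finset.mem_union, Finset.mem_filter, Finset.mem_filter] at hu'
      rcases hu' with hu' | hu'
      · exact lo_asymm l₁ hu.2.2.1 hu'.2.2.2.1
      · exact lo_asymm l₁ hu.2.2.1 hu'.2.2.2.1
    rw [Finset.filter_or, Finset.filter_or, Finset.card_union_of_disjoint hd1,
      Finset.card_union_of_disjoint hd23]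
  have n1 : ∀ v : V, v ≠ a₁ → v ≠ a₂ → v ≠ a₃ →
      (Finset.univ.filter (fun u =>
        (Sigma2 l₁ l₂ l₃).Adj v u ∧ l₁.lt v u ∧ l₂.lt u v ∧ l₃.lt u v)).card = 1 := by
    intro v hv1 hv2 hv3
    have := key_if l₁ l₂ l₃ hR.rep v (fun u => Iff.rfl)
      (iff_true_intro (nonapex_nonempty hR h12 h13 hv1 hv2 hv3))
    simpa using this
  have n2 : ∀ v : V, v ≠ a₁ → v ≠ a₂ → v ≠ a₃ →
      (Finset.univ.filter (fun u =>
        (Sigma2 l₁ l₂ l₃).Adj v u ∧ l₂.lt v u ∧ l₁.lt u v ∧ l₃.lt u v)).card = 1 := by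
    intro v hv1 hv2 hv3
    have := key_if l₂ l₁ l₃ hRc2.rep v
      (fun u => by rw [sigma2_swap12 l₁ l₂ l₃])
      (iff_true_intro (nonapex_nonempty hRc2 (Ne.symm h12) h23 hv2 hv1 hv3))
    simpa using this
  have n3 : ∀ v : V, v ≠ a₁ → v ≠ a₂ → v ≠ a₃ →
      (Finset.univ.filter (fun u =>
        (Sigma2 l₁ l₂ l₃).Adj v u ∧ l₃.lt v u ∧ l₁.lt u v ∧ l₂.lt u v)).card = 1 := by
    intro v hv1 hv2 hv3
    have := key_if l₃ l₁ l₂ hRc3.rep v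
      (fun u => by rw [sigma2_rot2 l₁ l₂ l₃])
      (iff_true_intro (nonapex_nonempty hRc3 (Ne.symm h13) (Ne.symm h23) hv3 hv1 hv2))
    simpa using this
  have z1 : (Finset.univ.filter (fun u =>
      (Sigma2 l₁ l₂ l₃).Adj a₁ u ∧ l₁.lt a₁ u ∧ l₂.lt u a₁ ∧ l₃.lt u a₁)).card = 0 := by
    have := key_if l₁ l₂ l₃ hR.rep a₁ (fun u => Iff.rfl) (iff_false_intro (apex1_empty hR))
    simpa using this
  have z2 : (Finset.univ.filter (fun u =>
      (Sigma2 l₁ l₂ l₃).Adj a₂ u ∧ l₂.lt a₂ u ∧ l₁.lt u a₂ ∧ l₃.lt u a₂)).card = 0 := by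
    have := key_if l₂ l₁ l₃ hRc2.rep a₂
      (fun u => by rw [sigma2_swap12 l₁ l₂ l₃]) (iff_false_intro (apex1_empty hRc2))
    simpa using this
  have z3 : (Finset.univ.filter (fun u =>
      (Sigma2 l₁ l₂ l₃).Adj a₃ u ∧ l₃.lt a₃ u ∧ l₁.lt u a₃ ∧ l₂.lt u a₃)).card = 0 := by
    have := key_if l₃ l₁ l₂ hRc3.rep a₃
      (fun u => by rw [sigma2_rot2 l₁ l₂ l₃]) (iff_false_intro (apex1_empty hRc3))
    simpa using this
  have e12 : (Finset.univ.filter (fun u =>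
      (Sigma2 l₁ l₂ l₃).Adj a₂ u ∧ l₁.lt a₂ u ∧ l₂.lt u a₂ ∧ l₃.lt u a₂)).card
      = if l₃.lt a₁ a₂ then 1 else 0 :=
    key_if l₁ l₂ l₃ hR.rep a₂ (fun u => Iff.rfl) (apex2_iff hR h12)
  have e13 : (Finset.univ.filter (fun u =>
      (Sigma2 l₁ l₂ l₃).Adj a₃ u ∧ l₁.lt a₃ u ∧ l₂.lt u a₃ ∧ l₃.lt u a₃)).card
      = if l₂.lt a₁ a₃ then 1 else 0 :=
    key_if l₁ l₂ l₃ hR.rep a₃ (fun u => Iff.rfl) (apex3_iff hR h13)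
  have e21 : (Finset.univ.filter (fun u =>
      (Sigma2 l₁ l₂ l₃).Adj a₁ u ∧ l₂.lt a₁ u ∧ l₁.lt u a₁ ∧ l₃.lt u a₁)).card
      = if l₃.lt a₂ a₁ then 1 else 0 :=
    key_if l₂ l₁ l₃ hRc2.rep a₁ (fun u => by rw [sigma2_swap12 l₁ l₂ l₃])
      (apex2_iff hRc2 (Ne.symm h12))
  have e23 : (Finset.univ.filter (fun u =>
      (Sigma2 l₁ l₂ l₃).Adj a₃ u ∧ l₂.lt a₃ u ∧ l₁.lt u a₃ ∧ l₃.lt u a₃)).card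
      = if l₁.lt a₂ a₃ then 1 else 0 :=
    key_if l₂ l₁ l₃ hRc2.rep a₃ (fun u => by rw [sigma2_swap12 l₁ l₂ l₃])
      (apex3_iff hRc2 h23)
  have e31 : (Finset.univ.filter (fun u =>
      (Sigma2 l₁ l₂ l₃).Adj a₁ u ∧ l₃.lt a₁ u ∧ l₁.lt u a₁ ∧ l₂.lt u a₁)).card
      = if l₂.lt a₃ a₁ then 1 else 0 :=
    key_if l₃ l₁ l₂ hRc3.rep a₁ (fun u => by rw [sigma2_rot2 l₁ l₂ l₃])
      (apex2_iff hRc3 (Ne.symm h13))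
  have e32 : (Finset.univ.filter (fun u =>
      (Sigma2 l₁ l₂ l₃).Adj a₂ u ∧ l₃.lt a₂ u ∧ l₁.lt u a₂ ∧ l₂.lt u a₂)).card
      = if l₁.lt a₃ a₂ then 1 else 0 :=
    key_if l₃ l₁ l₂ hRc3.rep a₂ (fun u => by rw [sigma2_rot2 l₁ l₂ l₃])
      (apex3_iff hRc3 (Ne.symm h23))
  -- the bijection between edges and (tail, head) pairs
  haveI : Fintype ↥(Sigma2 l₁ l₂ l₃).edgeSet := Set.Finite.fintype (Set.toFinite _)
  rw [Nat.card_eq_fintype_card, ← Set.toFinset_card]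
  have hbij : (Finset.univ.sigma (fun v : V => Finset.univ.filter (fun u =>
        ((Sigma2 l₁ l₂ l₃).Adj v u ∧ l₁.lt v u ∧ l₂.lt u v ∧ l₃.lt u v) ∨
        ((Sigma2 l₁ l₂ l₃).Adj v u ∧ l₂.lt v u ∧ l₁.lt u v ∧ l₃.lt u v) ∨
        ((Sigma2 l₁ l₂ l₃).Adj v u ∧ l₃.lt v u ∧ l₁.lt u v ∧ l₂.lt u v)))).card
      = ((Sigma2 l₁ l₂ l₃).edgeSet.toFinset).card := by
    apply Finset.card_bij (fun (p : Σ _ : V, V) _ => s(p.1, p.2))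
    · rintro ⟨v, u⟩ hp
      rw [Finset.mem_sigma] at hp
      have hp2 := hp.2
      rw [Finset.mem_filter] at hp2
      rw [Set.mem_toFinset, SimpleGraph.mem_edgeSet]
      rcases hp2.2 with h | h | h <;> exact h.1
    · rintro ⟨v, u⟩ hp ⟨v', u'⟩ hp' heq
      simp only [Sym2.eq_iff] at heq
      rcases heq with ⟨rfl, rfl⟩ | ⟨h1, h2⟩
      · rfl
      · exfalso
        subst h1; subst h2
        rw [Finset.mem_sigma, Finset.mem_filter] at hp hp'
        rcases hp.2.2 with ⟨_, hA1, hA2, hA3⟩ | ⟨_, hA1, hA2, hA3⟩ | ⟨_, hA1, hA2, hA3⟩ <;>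
          rcases hp'.2.2 with ⟨_, hB1, hB2, hB3⟩ | ⟨_, hB1, hB2, hB3⟩ | ⟨_, hB1, hB2, hB3⟩ <;>
          solve_by_elim [lo_asymm l₁, lo_asymm l₂, lo_asymm l₃]
    · intro e
      induction e using Sym2.ind with
      | _ x y =>
        intro he
        rw [Set.mem_toFinset, SimpleGraph.mem_edgeSet] at he
        have hxy : x ≠ y := he.ne
        rcases lo_total l₁ hxy with p1 | p1 <;> rcases lo_total l₂ hxy with p2 | p2 <;>
          rcases lo_total l₃ hxy with p3 | p3
        · exfalso
          rcases hR.rep y x (Ne.symm hxy) with q | q | q <;>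
            solve_by_elim [lo_asymm l₁, lo_asymm l₂, lo_asymm l₃]
        · exact ⟨⟨y, x⟩, Finset.mem_sigma.mpr ⟨Finset.mem_univ _, Finset.mem_filter.mpr
            ⟨Finset.mem_univ _, Or.inr (Or.inr ⟨he.symm, p3, p1, p2⟩)⟩⟩, Sym2.eq_swap⟩
        · exact ⟨⟨y, x⟩, Finset.mem_sigma.mpr ⟨Finset.mem_univ _, Finset.mem_filter.mpr
            ⟨Finset.mem_univ _, Or.inr (Or.inl ⟨he.symm, p2, p1, p3⟩)⟩⟩, Sym2.eq_swap⟩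
        · exact ⟨⟨x, y⟩, Finset.mem_sigma.mpr ⟨Finset.mem_univ _, Finset.mem_filter.mpr
            ⟨Finset.mem_univ _, Or.inl ⟨he, p1, p2, p3⟩⟩⟩, rfl⟩
        · exact ⟨⟨y, x⟩, Finset.mem_sigma.mpr ⟨Finset.mem_univ _, Finset.mem_filter.mpr
            ⟨Finset.mem_univ _, Or.inl ⟨he.symm, p1, p2, p3⟩⟩⟩, Sym2.eq_swap⟩
        · exact ⟨⟨x, y⟩, Finset.mem_sigma.mpr ⟨Finset.mem_univ _, Finset.mem_filter.mpr
            ⟨Finset.mem_univ _, Or.inr (Or.inl ⟨he, p2, p1, p3⟩)⟩⟩, rfl⟩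
        · exact ⟨⟨x, y⟩, Finset.mem_sigma.mpr ⟨Finset.mem_univ _, Finset.mem_filter.mpr
            ⟨Finset.mem_univ _, Or.inr (Or.inr ⟨he, p3, p1, p2⟩)⟩⟩, rfl⟩
        · exfalso
          rcases hR.rep x y hxy with q | q | q <;>
            solve_by_elim [lo_asymm l₁, lo_asymm l₂, lo_asymm l₃]
  rw [← hbij, Finset.card_sigma]
  have hAsub : ({a₁, a₂, a₃} : Finset V) ⊆ Finset.univ := Finset.subset_univ _
  rw [← Finset.sum_sdiff hAsub]
  have hAcard : ({a₁, a₂, a₃} : Finset V).card = 3 := by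
    rw [Finset.card_insert_of_notMem (by simp [h12, h13]),
      Finset.card_insert_of_notMem (by simp [h23]), Finset.card_singleton]
  have hsum1 : ∑ v ∈ (Finset.univ \ ({a₁, a₂, a₃} : Finset V)),
      (Finset.univ.filter (fun u =>
        ((Sigma2 l₁ l₂ l₃).Adj v u ∧ l₁.lt v u ∧ l₂.lt u v ∧ l₃.lt u v) ∨
        ((Sigma2 l₁ l₂ l₃).Adj v u ∧ l₂.lt v u ∧ l₁.lt u v ∧ l₃.lt u v) ∨
        ((Sigma2 l₁ l₂ l₃).Adj v u ∧ l₃.lt v u ∧ l₁.lt u v ∧ l₂.lt u v))).card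
      = 3 * (Fintype.card V - 3) := by
    have hval : ∀ v ∈ (Finset.univ \ ({a₁, a₂, a₃} : Finset V)),
        (Finset.univ.filter (fun u =>
          ((Sigma2 l₁ l₂ l₃).Adj v u ∧ l₁.lt v u ∧ l₂.lt u v ∧ l₃.lt u v) ∨
          ((Sigma2 l₁ l₂ l₃).Adj v u ∧ l₂.lt v u ∧ l₁.lt u v ∧ l₃.lt u v) ∨
          ((Sigma2 l₁ l₂ l₃).Adj v u ∧ l₃.lt v u ∧ l₁.lt u v ∧ l₂.lt u v))).card = 3 := by
      intro v hv
      simp only [Finset.mem_sdiff, Finset.mem_univ, true_and, Finset.mem_insert,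
        Finset.mem_singleton, not_or] at hv
      rw [hsplit v, n1 v hv.1 hv.2.1 hv.2.2, n2 v hv.1 hv.2.1 hv.2.2, n3 v hv.1 hv.2.1 hv.2.2]
    rw [Finset.sum_congr rfl hval, Finset.sum_const, Finset.card_sdiff_of_subset hAsub, hAcard,
      Finset.card_univ, smul_eq_mul, mul_comm]
  have hsum2 : ∑ v ∈ ({a₁, a₂, a₃} : Finset V),
      (Finset.univ.filter (fun u =>
        ((Sigma2 l₁ l₂ l₃).Adj v u ∧ l₁.lt v u ∧ l₂.lt u v ∧ l₃.lt u v) ∨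
        ((Sigma2 l₁ l₂ l₃).Adj v u ∧ l₂.lt v u ∧ l₁.lt u v ∧ l₃.lt u v) ∨
        ((Sigma2 l₁ l₂ l₃).Adj v u ∧ l₃.lt v u ∧ l₁.lt u v ∧ l₂.lt u v))).card = 3 := by
    rw [Finset.sum_insert (by simp [h12, h13]), Finset.sum_insert (by simp [h23]),
      Finset.sum_singleton, hsplit a₁, hsplit a₂, hsplit a₃, z1, z2, z3, e12, e13, e21,
      e23, e31, e32]
    rcases lo_total l₃ h12 with q1 | q1 <;> rcases lo_total l₂ h13 with q2 | q2 <;>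
      rcases lo_total l₁ h23 with q3 | q3 <;>
      simp [q1, q2, q3, lo_not_lt l₃ q1, lo_not_lt l₂ q2, lo_not_lt l₁ q3]
  rw [hsum1, hsum2]
  omega
end

section
/- Let R = (<₁, <₂, <₃) be a standard representation of a finite set V with |V| ≥ 4, with <ᵢ-maximum elements a₁, a₂, a₃. Then the subgraph of Σ₂(R) induced on the set of neighbors of a₁ contains a Hamiltonian cycle, namely the cycle that visits the neighbors of a₁ in increasing <₂-order (each pair of <₂-consecutive neighbors is adjacent, and the <₂-smallest neighbor a₃ is adjacent to the <₂-largest neighbor a₂). -/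
/-!
Since `a₁` is the `<₁`-maximum, `x` is a neighbour of `a₁` iff every other vertex lies above
both `a₁` and `x` in `<₂` or in `<₃`. For neighbours `w <₂ w'`, the only vertices `z ≠ a₁` lying
above `w` and `w'` in none of the orders are the *crossings*: `<₂`-between `w` and `w'`,
`<₃`-between `w'` and `w`, and above `a₁` in both orders. A `<₂`-least crossing is itself a neighbour of `a₁`, so `<₂`-consecutive
neighbours have no crossing and are adjacent. The standard conditions make `a₃` and `a₂` the
`<₂`-least and `<₂`-greatest neighbours and adjacent to each other, so listing the neighbours in
`<₂`-order closes up into a Hamiltonian cycle; it has length at least three because the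
`<₂`-least vertex outside `{a₁, a₂, a₃}` is a neighbour as well.
-/

open SimpleGraph

variable {V : Type*}

theorem Fin.covBy_or_eq_last_of_sub_eq_one {n : ℕ} {u v : Fin (n + 1)} (h : u - v = 1) :
    v ⋖ u ∨ v = Fin.last n ∧ u = 0 := by
  rw [sub_eq_iff_eq_add'] at h
  subst h
  by_cases hv : v = Fin.last n
  · exact Or.inr ⟨hv, by simp [hv]⟩
  · left
    rw [Fin.covBy_iff, Nat.covBy_iff_add_one_eq, Fin.val_add_one, if_neg hv]

theorem SimpleGraph.cycleGraph.isHamiltonianCycle_cycle (n : ℕ) :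
    (cycleGraph.cycle n).IsHamiltonianCycle := by
  rw [Walk.isHamiltonianCycle_iff_isCycle_and_length_eq]
  exact ⟨cycleGraph.isCycle_cycle, by simp [cycleGraph.length_cycle]⟩

theorem SimpleGraph.exists_isHamiltonianCycle_of_covBy {α : Type*} [LinearOrder α]
    [DecidableEq α] [Finite α] (G : SimpleGraph α) (hcard : 3 ≤ Nat.card α)
    (hcov : ∀ x y : α, x ⋖ y → G.Adj x y)
    (hbot_top : ∀ x y : α, IsBot x → IsTop y → G.Adj x y) :
    ∃ (v : α) (c : G.Walk v v), c.IsHamiltonianCycle := by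
  have := Fintype.ofFinite α
  obtain ⟨n, hn⟩ := Nat.exists_eq_add_of_le' hcard
  let e := Fintype.orderIsoFinOfCardEq α (Nat.card_eq_fintype_card.symm.trans hn)
  have he : ∀ u v, u - v = 1 → G.Adj (e u) (e v) := by
    intro u v huv
    rcases Fin.covBy_or_eq_last_of_sub_eq_one huv with hvu | ⟨rfl, rfl⟩
    · exact (hcov _ _ ((apply_covBy_apply_iff e).mpr hvu)).symm
    · exact hbot_top _ _ (fun _ => e.le_symm_apply.mp (Fin.zero_le _))
        (fun _ => e.symm_apply_le.mp (Fin.le_last _))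
  let f : cycleGraph (n + 3) →g G := ⟨e, fun h => h.elim (he _ _) (fun h => (he _ _ h).symm)⟩
  exact ⟨_, _, (cycleGraph.isHamiltonianCycle_cycle n).map (f := f) e.bijective⟩

namespace LinearOrder

variable {α : Type*} (l : LinearOrder α) {x y z : α}

theorem lt_trans (h₁ : l.lt x y) (h₂ : l.lt y z) : l.lt x z := _root_.lt_trans h₁ h₂

theorem lt_asymm (h : l.lt x y) : ¬l.lt y x := _root_.lt_asymm h

theorem ne_of_lt (h : l.lt x y) : x ≠ y := _root_.ne_of_lt h

theorem lt_or_gt_of_ne (h : x ≠ y) : l.lt x y ∨ l.lt y x := _root_.lt_or_gt_of_ne h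

theorem not_lt_of_ge (h : l.le y x) : ¬l.lt x y := _root_.not_lt_of_ge h

theorem wellFounded_lt [Finite α] : WellFounded l.lt := Finite.wellFounded_of_trans_of_irrefl _

end LinearOrder

section StandardRepresentation

variable {l₁ l₂ l₃ : LinearOrder V} {a₁ a₂ a₃ : V}

theorem AmongTwoSmallest.lt_and_lt {l : LinearOrder V} {p q : V} (hp : AmongTwoSmallest l p)
    (hq : AmongTwoSmallest l q) (hpq : p ≠ q) {z : V} (hzp : z ≠ p) (hzq : z ≠ q) :
    l.lt p z ∧ l.lt q z := by
  have of_lt : ∀ {b c}, AmongTwoSmallest l c → l.lt b c → z ≠ b → z ≠ c →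
      l.lt b z ∧ l.lt c z := fun hc hbc hzb hzc => by
    have hcz := (l.lt_or_gt_of_ne hzc).resolve_left fun hzc' => hzb (hc z _ hzc' hbc)
    exact ⟨l.lt_trans hbc hcz, hcz⟩
  rcases l.lt_or_gt_of_ne hpq with h | h
  · exact of_lt hq h hzp hzq
  · exact (of_lt hp h hzq hzp).symm

theorem IsMaxOf.not_amongTwoSmallest [Fintype V] (hV : 3 ≤ Fintype.card V) {l : LinearOrder V}
    {a : V} (ha : IsMaxOf l a) : ¬AmongTwoSmallest l a := fun ha' => by
  have hcard : 1 < (Finset.univ.erase a).card := by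
    rw [Finset.card_erase_of_mem (Finset.mem_univ a), Finset.card_univ]
    omega
  obtain ⟨x, hx, y, hy, hxy⟩ := Finset.one_lt_card.mp hcard
  exact hxy (ha' x y (ha x (Finset.ne_of_mem_erase hx)) (ha y (Finset.ne_of_mem_erase hy)))

theorem IsMaxOf.eq_of_le {l : LinearOrder V} {a x : V} (ha : IsMaxOf l a) (h : l.le a x) :
    x = a := by
  by_contra hne
  exact l.not_lt_of_ge h (ha x hne)

namespace IsStdRep

variable [Fintype V]

theorem a₁_ne_a₂ (hR : IsStdRep l₁ l₂ l₃ a₁ a₂ a₃) (hV : 3 ≤ Fintype.card V) : a₁ ≠ a₂ :=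
  fun h => hR.top₂.not_amongTwoSmallest hV (h ▸ hR.a₁_small₂)

theorem a₁_ne_a₃ (hR : IsStdRep l₁ l₂ l₃ a₁ a₂ a₃) (hV : 3 ≤ Fintype.card V) : a₁ ≠ a₃ :=
  fun h => hR.top₃.not_amongTwoSmallest hV (h ▸ hR.a₁_small₃)

theorem a₂_ne_a₃ (hR : IsStdRep l₁ l₂ l₃ a₁ a₂ a₃) (hV : 3 ≤ Fintype.card V) : a₂ ≠ a₃ :=
  fun h => hR.top₃.not_amongTwoSmallest hV (h ▸ hR.a₂_small₃)

theorem adj_a₁_a₂ (hR : IsStdRep l₁ l₂ l₃ a₁ a₂ a₃) (hV : 3 ≤ Fintype.card V) :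
    (Sigma2 l₁ l₂ l₃).Adj a₁ a₂ :=
  ⟨hR.a₁_ne_a₂ hV, fun _ hz₁ hz₂ =>
    Or.inr (Or.inr (hR.a₁_small₃.lt_and_lt hR.a₂_small₃ (hR.a₁_ne_a₂ hV) hz₁ hz₂))⟩

theorem adj_a₁_a₃ (hR : IsStdRep l₁ l₂ l₃ a₁ a₂ a₃) (hV : 3 ≤ Fintype.card V) :
    (Sigma2 l₁ l₂ l₃).Adj a₁ a₃ :=
  ⟨hR.a₁_ne_a₃ hV, fun _ hz₁ hz₃ =>
    Or.inr (Or.inl (hR.a₁_small₂.lt_and_lt hR.a₃_small₂ (hR.a₁_ne_a₃ hV) hz₁ hz₃))⟩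

theorem adj_a₃_a₂ (hR : IsStdRep l₁ l₂ l₃ a₁ a₂ a₃) (hV : 3 ≤ Fintype.card V) :
    (Sigma2 l₁ l₂ l₃).Adj a₃ a₂ :=
  ⟨(hR.a₂_ne_a₃ hV).symm, fun _ hz₃ hz₂ =>
    Or.inl (hR.a₃_small₁.lt_and_lt hR.a₂_small₁ (hR.a₂_ne_a₃ hV).symm hz₃ hz₂)⟩

theorem lt₂_a₃ (hR : IsStdRep l₁ l₂ l₃ a₁ a₂ a₃) (hV : 3 ≤ Fintype.card V) {x : V}
    (hx₁ : x ≠ a₁) (hx₃ : x ≠ a₃) : l₂.lt a₃ x :=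
  (hR.a₁_small₂.lt_and_lt hR.a₃_small₂ (hR.a₁_ne_a₃ hV) hx₁ hx₃).2

theorem eq_a₃_of_le₂ (hR : IsStdRep l₁ l₂ l₃ a₁ a₂ a₃) (hV : 3 ≤ Fintype.card V) {x : V}
    (hx : (Sigma2 l₁ l₂ l₃).Adj a₁ x) (h : l₂.le x a₃) : x = a₃ := by
  by_contra hne
  exact l₂.not_lt_of_ge h (hR.lt₂_a₃ hV hx.ne' hne)

end IsStdRep

theorem IsMaxOf.lt₂_or_lt₃_of_adj (h₁ : IsMaxOf l₁ a₁) {x z : V}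
    (hx : (Sigma2 l₁ l₂ l₃).Adj a₁ x) (hz₁ : z ≠ a₁) (hzx : z ≠ x) :
    (l₂.lt a₁ z ∧ l₂.lt x z) ∨ (l₃.lt a₁ z ∧ l₃.lt x z) := by
  rcases hx.2 z hz₁ hzx with h | h | h
  · exact absurd (h₁ z hz₁) (l₁.lt_asymm h.1)
  · exact Or.inl h
  · exact Or.inr h

structure IsCrossing (l₂ l₃ : LinearOrder V) (a₁ w w' z : V) : Prop where
  lt₂_a₁ : l₂.lt a₁ z
  lt₃_a₁ : l₃.lt a₁ z
  lt₂_left : l₂.lt w z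
  lt₂_right : l₂.lt z w'
  lt₃_left : l₃.lt w' z
  lt₃_right : l₃.lt z w

theorem IsCrossing.adj_or_exists_lt₂ (h₁ : IsMaxOf l₁ a₁) {w w' z : V}
    (hw : (Sigma2 l₁ l₂ l₃).Adj a₁ w) (hw' : (Sigma2 l₁ l₂ l₃).Adj a₁ w')
    (hz : IsCrossing l₂ l₃ a₁ w w' z) :
    (Sigma2 l₁ l₂ l₃).Adj a₁ z ∨ ∃ u, IsCrossing l₂ l₃ a₁ w w' u ∧ l₂.lt u z := by
  by_cases hlower : ∃ u, IsCrossing l₂ l₃ a₁ w w' u ∧ l₂.lt u z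
  · exact Or.inr hlower
  refine Or.inl ⟨l₂.ne_of_lt hz.lt₂_a₁, fun u hu₁ huz => ?_⟩
  by_cases huw : u = w
  · subst huw
    exact Or.inr (Or.inr ⟨l₃.lt_trans hz.lt₃_a₁ hz.lt₃_right, hz.lt₃_right⟩)
  by_cases huw' : u = w'
  · subst huw'
    exact Or.inr (Or.inl ⟨l₂.lt_trans hz.lt₂_a₁ hz.lt₂_right, hz.lt₂_right⟩)
  rcases h₁.lt₂_or_lt₃_of_adj hw' hu₁ huw' with ⟨ha₁u, hw'u⟩ | ⟨ha₁u, hw'u⟩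
  · exact Or.inr (Or.inl ⟨ha₁u, l₂.lt_trans hz.lt₂_right hw'u⟩)
  rcases h₁.lt₂_or_lt₃_of_adj hw hu₁ huw with ⟨ha₁u', hwu⟩ | ⟨-, hwu⟩
  · rcases l₂.lt_or_gt_of_ne huz.symm with hzu | huz₂
    · exact Or.inr (Or.inl ⟨ha₁u', hzu⟩)
    rcases l₃.lt_or_gt_of_ne huz.symm with hzu | huz₃
    · exact Or.inr (Or.inr ⟨ha₁u, hzu⟩)
    exact absurd ⟨u, ⟨ha₁u', ha₁u, hwu, l₂.lt_trans huz₂ hz.lt₂_right, hw'u,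
      l₃.lt_trans huz₃ hz.lt₃_right⟩, huz₂⟩ hlower
  · exact Or.inr (Or.inr ⟨ha₁u, l₃.lt_trans hz.lt₃_right hwu⟩)

theorem IsCrossing.exists_adj_between [Finite V] (h₁ : IsMaxOf l₁ a₁) {w w' z : V}
    (hw : (Sigma2 l₁ l₂ l₃).Adj a₁ w) (hw' : (Sigma2 l₁ l₂ l₃).Adj a₁ w')
    (hz : IsCrossing l₂ l₃ a₁ w w' z) :
    ∃ u, (Sigma2 l₁ l₂ l₃).Adj a₁ u ∧ l₂.lt w u ∧ l₂.lt u w' := by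
  obtain ⟨u, hu, hmin⟩ := l₂.wellFounded_lt.has_min
    {u | IsCrossing l₂ l₃ a₁ w w' u} ⟨z, hz⟩
  rcases hu.adj_or_exists_lt₂ h₁ hw hw' with hadj | ⟨v, hv, hvu⟩
  · exact ⟨u, hadj, hu.lt₂_left, hu.lt₂_right⟩
  · exact absurd hvu (hmin v hv)

theorem IsMaxOf.adj_of_consecutive [Finite V] (h₁ : IsMaxOf l₁ a₁) {w w' : V}
    (hw : (Sigma2 l₁ l₂ l₃).Adj a₁ w) (hw' : (Sigma2 l₁ l₂ l₃).Adj a₁ w') (hww' : l₂.lt w w')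
    (hcons : ∀ u, (Sigma2 l₁ l₂ l₃).Adj a₁ u → ¬(l₂.lt w u ∧ l₂.lt u w')) :
    (Sigma2 l₁ l₂ l₃).Adj w w' := by
  refine ⟨l₂.ne_of_lt hww', fun z hzw hzw' => ?_⟩
  by_cases hz₁ : z = a₁
  · subst hz₁
    exact Or.inl ⟨h₁ w hw.ne', h₁ w' hw'.ne'⟩
  rcases h₁.lt₂_or_lt₃_of_adj hw' hz₁ hzw' with ⟨-, hw'z⟩ | ⟨ha₁z₃, hw'z⟩
  · exact Or.inr (Or.inl ⟨l₂.lt_trans hww' hw'z, hw'z⟩)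
  rcases h₁.lt₂_or_lt₃_of_adj hw hz₁ hzw with ⟨ha₁z₂, hwz⟩ | ⟨-, hwz⟩
  · rcases l₂.lt_or_gt_of_ne hzw' with hzw'₂ | hw'z₂
    · rcases l₃.lt_or_gt_of_ne hzw with hzw₃ | hwz₃
      · have hz : IsCrossing l₂ l₃ a₁ w w' z := ⟨ha₁z₂, ha₁z₃, hwz, hzw'₂, hw'z, hzw₃⟩
        obtain ⟨u, hu, hwu, huw'⟩ := hz.exists_adj_between h₁ hw hw'
        exact absurd ⟨hwu, huw'⟩ (hcons u hu)
      · exact Or.inr (Or.inr ⟨hwz₃, hw'z⟩)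
    · exact Or.inr (Or.inl ⟨l₂.lt_trans hww' hw'z₂, hw'z₂⟩)
  · exact Or.inr (Or.inr ⟨hwz, hw'z⟩)

theorem IsStdRep.exists_adj_a₁_ne [Fintype V] (hR : IsStdRep l₁ l₂ l₃ a₁ a₂ a₃)
    (hV : 4 ≤ Fintype.card V) : ∃ m, (Sigma2 l₁ l₂ l₃).Adj a₁ m ∧ m ≠ a₂ ∧ m ≠ a₃ := by
  have hV₃ : 3 ≤ Fintype.card V := by omega
  have hrest : ∃ m, m ∉ ({a₁, a₂, a₃} : Finset V) := by
    obtain ⟨m, -, hm⟩ := Finset.exists_mem_notMem_of_card_lt_card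
      (Finset.card_le_three.trans_lt (by rwa [Finset.card_univ]) :
        ({a₁, a₂, a₃} : Finset V).card < Finset.univ.card)
    exact ⟨m, hm⟩
  obtain ⟨m, hm, hmin⟩ := l₂.wellFounded_lt.has_min {m | m ∉ ({a₁, a₂, a₃} : Finset V)} hrest
  simp only [Set.mem_ofPred_eq, Finset.mem_insert, Finset.mem_singleton, not_or] at hm hmin
  obtain ⟨hm₁, hm₂, hm₃⟩ := hm
  refine ⟨m, ⟨Ne.symm hm₁, fun z hz₁ hzm => ?_⟩, hm₂, hm₃⟩
  by_cases hz₃ : z = a₃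
  · subst hz₃
    exact Or.inr (Or.inr ⟨hR.top₃ a₁ (hR.a₁_ne_a₃ hV₃), hR.top₃ m hm₃⟩)
  by_cases hz₂ : z = a₂
  · subst hz₂
    exact Or.inr (Or.inl ⟨hR.top₂ a₁ (hR.a₁_ne_a₂ hV₃), hR.top₂ m hm₂⟩)
  exact Or.inr (Or.inl ⟨(hR.a₁_small₂.lt_and_lt hR.a₃_small₂ (hR.a₁_ne_a₃ hV₃) hz₁ hz₃).1,
    (l₂.lt_or_gt_of_ne hzm).resolve_left (hmin z ⟨hz₁, hz₂, hz₃⟩)⟩)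

theorem IsStdRep.three_le_ncard_neighborSet [Fintype V] (hR : IsStdRep l₁ l₂ l₃ a₁ a₂ a₃)
    (hV : 4 ≤ Fintype.card V) : 3 ≤ ((Sigma2 l₁ l₂ l₃).neighborSet a₁).ncard := by
  have hV₃ : 3 ≤ Fintype.card V := by omega
  obtain ⟨m, hm, hm₂, hm₃⟩ := hR.exists_adj_a₁_ne hV
  rw [← Set.ncard_eq_three.mpr ⟨a₂, a₃, m, hR.a₂_ne_a₃ hV₃, hm₂.symm, hm₃.symm, rfl⟩]
  refine Set.ncard_le_ncard ?_ (Set.toFinite _)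
  simp [Set.insert_subset_iff, hR.adj_a₁_a₂ hV₃, hR.adj_a₁_a₃ hV₃, hm]

end StandardRepresentation

/-- The subgraph of Σ₂(R) induced on the neighbors of a₁ has a
Hamiltonian cycle, namely the one visiting the neighbors in increasing <₂-order:
<₂-consecutive neighbors are adjacent, and the <₂-smallest neighbor a₃ is adjacent to
the <₂-largest neighbor a₂. -/
theorem stmt13 {V : Type*} [Fintype V] (hV : 4 ≤ Fintype.card V)
    (l₁ l₂ l₃ : LinearOrder V) (a₁ a₂ a₃ : V)
    (hR : IsStdRep l₁ l₂ l₃ a₁ a₂ a₃) :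
    (∃ (v : ((Sigma2 l₁ l₂ l₃).neighborSet a₁))
        (c : ((Sigma2 l₁ l₂ l₃).induce ((Sigma2 l₁ l₂ l₃).neighborSet a₁)).Walk v v),
          c.IsHamiltonianCycle) ∧
      (∀ w w', (Sigma2 l₁ l₂ l₃).Adj a₁ w → (Sigma2 l₁ l₂ l₃).Adj a₁ w' →
        l₂.lt w w' →
        (∀ u, (Sigma2 l₁ l₂ l₃).Adj a₁ u → ¬(l₂.lt w u ∧ l₂.lt u w')) →
        (Sigma2 l₁ l₂ l₃).Adj w w') ∧
      (Sigma2 l₁ l₂ l₃).Adj a₃ a₂ := by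
  have hV₃ : 3 ≤ Fintype.card V := by omega
  refine ⟨?_, fun _ _ => hR.top₁.adj_of_consecutive, hR.adj_a₃_a₂ hV₃⟩
  set S := (Sigma2 l₁ l₂ l₃).neighborSet a₁
  have ha₂ : a₂ ∈ S := hR.adj_a₁_a₂ hV₃
  have ha₃ : a₃ ∈ S := hR.adj_a₁_a₃ hV₃
  -- `l₁`, `l₂`, `l₃` are all local instances, so the `<₂`-order on `S` must be passed explicitly.
  refine @exists_isHamiltonianCycle_of_covBy S
    (@LinearOrder.lift' _ _ l₂ Subtype.val Subtype.val_injective) _ _ _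
    (hR.three_le_ncard_neighborSet hV)
    (fun x y hxy => ?_) fun x y hx hy => ?_
  · exact hR.top₁.adj_of_consecutive x.2 y.2 hxy.1 fun u hu h => hxy.2 (c := ⟨u, hu⟩) h.1 h.2
  · obtain rfl : x = ⟨a₃, ha₃⟩ := Subtype.ext (hR.eq_a₃_of_le₂ hV₃ x.2 (hx ⟨a₃, ha₃⟩))
    obtain rfl : y = ⟨a₂, ha₂⟩ := Subtype.ext (hR.top₂.eq_of_le (hy ⟨a₂, ha₂⟩))
    exact hR.adj_a₃_a₂ hV₃
end
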